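/- arXiv:2009.02514 — 4 statements merged into one kernel-verified Lean document; each statement's English description precedes it below -/
import Mathlib

section
/- Let α ∈ (0,1) and let X be an ℝ^d-valued random variable with P(|X| > x) = x^{-α}ℓ(x) for a slowly varying function ℓ. Then for every M > 0 there exists C > 0 such that |Ψ(s+h) - Ψ(s)| ≤ C·|h|^α·ℓ(1/|h|) for all s, h ∈ Π_M(0) with h ≠ 0, where Ψ(s) = E[e^{i s·X}]. -/
open MeasureTheory Filter
open scoped RealInnerProductSpace

lemma norm_exp_mul_I_sub_one_le (x : ℝ) : ‖Complex.exp (x * Complex.I) - 1‖ ≤ |x| := by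
  have h1 : Complex.exp (x * Complex.I) - 1 = ↑(Real.cos x - 1) + ↑(Real.sin x) * Complex.I := by
    rw [Complex.exp_mul_I]
    push_cast [Complex.ofReal_cos, Complex.ofReal_sin]
    ring
  rw [h1, Complex.norm_add_mul_I]
  have h2 : (Real.cos x - 1)^2 + Real.sin x ^2 = 4 * Real.sin (x/2) ^ 2 := by
    have := Real.cos_sq (x/2)
    have h3 : Real.sin (x/2)^2 = 1 - Real.cos (x/2)^2 := Real.sin_sq _
    have h4 : (2:ℝ) * (x/2) = x := by ring
    rw [h4] at this
    nlinarith [Real.sin_sq_add_cos_sq x]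
  rw [h2]
  have h5 : |Real.sin (x/2)| ≤ |x/2| := Real.abs_sin_le_abs
  have h6 : Real.sin (x/2)^2 ≤ (x/2)^2 := by
    rw [← _root_.sq_abs (Real.sin (x/2)), ← _root_.sq_abs (x/2)]
    exact pow_le_pow_left₀ (abs_nonneg _) h5 2
  have : (4:ℝ) * Real.sin (x/2)^2 ≤ x^2 := by nlinarith
  calc Real.sqrt (4 * Real.sin (x/2)^2) ≤ Real.sqrt (x^2) := Real.sqrt_le_sqrt this
    _ = |x| := Real.sqrt_sq_eq_abs x

set_option maxHeartbeats 2000000 in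
/-- Lemma `lemma-chfacts`(i): Hölder modulus of continuity of the characteristic function,
case α ∈ (0,1). -/
theorem charFun_modulus_of_continuity
    {Ω : Type*} [MeasurableSpace Ω] (μ : Measure Ω) [IsProbabilityMeasure μ]
    (d : ℕ) (hd : 0 < d)
    (X : Ω → EuclideanSpace ℝ (Fin d)) (hXmeas : Measurable X)
    (α : ℝ) (hα : α ∈ Set.Ioo (0 : ℝ) 1)
    (ℓ : ℝ → ℝ) (hℓpos : ∀ x > (0 : ℝ), 0 < ℓ x)
    (hℓslow : ∀ lam > (0 : ℝ), Tendsto (fun x => ℓ (lam * x) / ℓ x) atTop (nhds 1))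
    (hℓtail : ∀ x > (0 : ℝ), (μ {ω | ‖X ω‖ > x}).toReal = x ^ (-α) * ℓ x) :
    ∀ M > (0 : ℝ), ∃ C > (0 : ℝ), ∀ s h : EuclideanSpace ℝ (Fin d),
      (∀ j, s j ∈ Set.Ioc (-M) M) → (∀ j, h j ∈ Set.Ioc (-M) M) → h ≠ 0 →
      ‖(∫ ω, Complex.exp ((⟪s + h, X ω⟫ : ℂ) * Complex.I) ∂μ)
          - ∫ ω, Complex.exp ((⟪s, X ω⟫ : ℂ) * Complex.I) ∂μ‖
        ≤ C * ‖h‖ ^ α * ℓ (1 / ‖h‖) := by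
  classical
  obtain ⟨hα0, hα1⟩ := hα
  intro M hM
  -- abbreviations
  set P : ℝ → ℝ := fun x => (μ {ω | ‖X ω‖ > x}).toReal with hP
  set β : ℝ := (1 - α) / 2 with hβ
  have hβ0 : 0 < β := by rw [hβ]; linarith
  set ρ : ℝ := (2:ℝ) ^ β with hρ
  have hρ1 : 1 < ρ := by
    rw [hρ, Real.one_lt_rpow_iff_of_pos two_pos]
    exact Or.inl ⟨one_lt_two, hβ0⟩
  have hρ0 : 0 < ρ := lt_trans one_pos hρ1
  set q : ℝ := (2:ℝ) ^ (-β) with hq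
  have hq0 : 0 < q := Real.rpow_pos_of_pos two_pos _
  have hq1 : q < 1 := Real.rpow_lt_one_of_one_lt_of_neg one_lt_two (neg_lt_zero.2 hβ0)
  have hρq : ρ * q = 1 := by
    rw [hρ, hq, ← Real.rpow_add two_pos]; simp
  -- tail measurability and antitonicity
  have hsetm : ∀ x : ℝ, MeasurableSet {ω | ‖X ω‖ > x} :=
    fun x => measurableSet_lt measurable_const hXmeas.norm
  have hPanti : ∀ x y : ℝ, x ≤ y → P y ≤ P x := by
    intro x y hxy
    exact ENNReal.toReal_mono (measure_ne_top _ _)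
      (measure_mono (fun ω hω => lt_of_le_of_lt hxy hω))
  have hP0 : ∀ x, 0 ≤ P x := fun x => ENNReal.toReal_nonneg
  have hℓeq : ∀ T : ℝ, 0 < T → ℓ T = T ^ α * P T := by
    intro T hT
    show ℓ T = T ^ α * (μ {ω | ‖X ω‖ > T}).toReal
    rw [hℓtail T hT, ← mul_assoc, ← Real.rpow_add hT]
    simp
  -- ratio step from slow variation
  have hev : ∀ᶠ x in atTop, 1/ρ < ℓ (2*x) / ℓ x := by
    have := (hℓslow 2 two_pos).eventually (eventually_gt_nhds (by
      rw [div_lt_one hρ0]; exact hρ1))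
    exact this
  obtain ⟨x₁, hx₁⟩ := eventually_atTop.mp hev
  set x₀ : ℝ := max x₁ 1 with hx₀
  have hx₀1 : (1:ℝ) ≤ x₀ := le_max_right _ _
  have hx₀0 : (0:ℝ) < x₀ := lt_of_lt_of_le one_pos hx₀1
  have hstep : ∀ x, x₀ ≤ x → ℓ x ≤ ρ * ℓ (2*x) := by
    intro x hx
    have hxpos : 0 < x := lt_of_lt_of_le hx₀0 hx
    have h := hx₁ x (le_trans (le_max_left _ _) hx)
    have hl := hℓpos x hxpos
    have hl2 := hℓpos (2*x) (by linarith)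
    rw [div_lt_div_iff₀ hρ0 hl] at h
    nlinarith
  have hiter : ∀ n : ℕ, ∀ x, x₀ ≤ x → ℓ x ≤ ρ^n * ℓ (2^n * x) := by
    intro n
    induction n with
    | zero => intro x _; simp
    | succ n ih =>
      intro x hx
      have hxpos : 0 < x := lt_of_lt_of_le hx₀0 hx
      have h2n : (1:ℝ) ≤ 2^n := one_le_pow₀ one_le_two
      have hx2 : x₀ ≤ 2^n * x := le_trans hx (by nlinarith)
      calc ℓ x ≤ ρ^n * ℓ (2^n * x) := ih x hx
        _ ≤ ρ^n * (ρ * ℓ (2 * (2^n * x))) := by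
            have := hstep (2^n * x) hx2
            exact mul_le_mul_of_nonneg_left this (pow_nonneg hρ0.le n)
        _ = ρ^(n+1) * ℓ (2^(n+1) * x) := by
            rw [show (2:ℝ) * (2^n * x) = 2^(n+1) * x by ring]
            ring
  -- lower bound for ℓ on [x₀, ∞)
  set K : ℝ := (2:ℝ)^(-α) * q * x₀^β * ℓ x₀ with hKdef
  have hK0 : 0 < K := by
    have := hℓpos x₀ hx₀0
    have h1 : (0:ℝ) < (2:ℝ)^(-α) := Real.rpow_pos_of_pos two_pos _
    have h2 : (0:ℝ) < x₀^β := Real.rpow_pos_of_pos hx₀0 _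
    positivity
  have hlow : ∀ T, x₀ ≤ T → K * T^(-β) ≤ ℓ T := by
    intro T hT
    have hT0 : 0 < T := lt_of_lt_of_le hx₀0 hT
    have hr1 : (1:ℝ) ≤ T / x₀ := (one_le_div hx₀0).mpr hT
    obtain ⟨n, hn1, hn2⟩ := exists_nat_pow_near hr1 one_lt_two
    set m := n + 1 with hm
    have hm1 : T / x₀ ≤ 2^m := hn2.le
    have hm2 : (2:ℝ)^m ≤ 2 * (T / x₀) := by
      rw [hm, pow_succ]
      nlinarith [hn1]
    set y : ℝ := 2^m * x₀ with hy
    have hTy : T ≤ y := by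
      rw [hy]
      calc T = (T / x₀) * x₀ := by field_simp
        _ ≤ 2^m * x₀ := mul_le_mul_of_nonneg_right hm1 hx₀0.le
    have hy2T : y ≤ 2 * T := by
      rw [hy]
      calc (2:ℝ)^m * x₀ ≤ (2 * (T / x₀)) * x₀ := mul_le_mul_of_nonneg_right hm2 hx₀0.le
        _ = 2 * T := by field_simp
    have hy0 : 0 < y := lt_of_lt_of_le hT0 hTy
    -- ℓ y ≥ ρ^(-m) ℓ x₀
    have hly : ℓ x₀ / ρ^m ≤ ℓ y := by
      have := hiter m x₀ le_rfl
      rw [div_le_iff₀ (pow_pos hρ0 m)]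
      nlinarith [this]
    -- P T ≥ P y = y^(-α) ℓ y
    have hPy : P y = y^(-α) * ℓ y := by
      show (μ {ω | ‖X ω‖ > y}).toReal = y^(-α) * ℓ y
      rw [hℓtail y hy0]
    have hρm : ρ^m ≤ (2*T/x₀)^β := by
      have : ((2:ℝ)^m)^β ≤ (2*T/x₀)^β := by
        apply Real.rpow_le_rpow (by positivity) _ hβ0.le
        calc (2:ℝ)^m ≤ 2 * (T/x₀) := hm2
          _ = 2*T/x₀ := by ring
      calc ρ^m = ((2:ℝ)^β)^m := by rw [hρ]
        _ = ((2:ℝ)^m)^β := by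
            rw [← Real.rpow_natCast ((2:ℝ)^β) m, ← Real.rpow_natCast (2:ℝ) m,
              ← Real.rpow_mul two_pos.le, ← Real.rpow_mul two_pos.le, mul_comm]
        _ ≤ (2*T/x₀)^β := this
    have hbound : K * T^(-β) ≤ T^α * (y^(-α) * (ℓ x₀ / ρ^m)) := by
      have hyα : (2*T)^(-α) ≤ y^(-α) := by
        rw [Real.rpow_neg (by positivity), Real.rpow_neg hy0.le]
        apply inv_anti₀ (Real.rpow_pos_of_pos hy0 _)
        exact Real.rpow_le_rpow hy0.le hy2T hα0.le
      have hρminv : (2*T/x₀)^(-β) ≤ (ρ^m)⁻¹ := by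
        rw [Real.rpow_neg (by positivity)]
        exact inv_anti₀ (pow_pos hρ0 m) hρm
      have e2T : (2*T)^(-α) = (2:ℝ)^(-α) * T^(-α) := Real.mul_rpow two_pos.le hT0.le
      have ex : (2*T/x₀)^(-β) = (2:ℝ)^(-β) * T^(-β) * x₀^β := by
        rw [Real.div_rpow (by positivity) hx₀0.le, Real.mul_rpow two_pos.le hT0.le,
          Real.rpow_neg hx₀0.le, div_inv_eq_mul]
      have hTT : T^α * T^(-α) = 1 := by rw [← Real.rpow_add hT0]; simp
      have hexp : K * T^(-β) = T^α * ((2*T)^(-α) * (ℓ x₀ * (2*T/x₀)^(-β))) := by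
        rw [e2T, ex, hKdef, hq]
        linear_combination (-(2:ℝ)^(-α) * 2^(-β) * x₀^β * ℓ x₀ * T^(-β)) * hTT
      rw [hexp]
      apply mul_le_mul_of_nonneg_left _ (Real.rpow_pos_of_pos hT0 _).le
      have hℓx₀ := hℓpos x₀ hx₀0
      calc (2*T)^(-α) * (ℓ x₀ * (2*T/x₀)^(-β))
          ≤ (2*T)^(-α) * (ℓ x₀ * (ρ^m)⁻¹) := by
            apply mul_le_mul_of_nonneg_left _ (Real.rpow_pos_of_pos (by positivity) _).le
            exact mul_le_mul_of_nonneg_left hρminv hℓx₀.le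
        _ = (2*T)^(-α) * (ℓ x₀ / ρ^m) := by rw [div_eq_mul_inv]
        _ ≤ y^(-α) * (ℓ x₀ / ρ^m) := by
            apply mul_le_mul_of_nonneg_right hyα
            positivity
    calc K * T^(-β) ≤ T^α * (y^(-α) * (ℓ x₀ / ρ^m)) := hbound
      _ ≤ T^α * (y^(-α) * ℓ y) := by
          apply mul_le_mul_of_nonneg_left _ (Real.rpow_pos_of_pos hT0 _).le
          exact mul_le_mul_of_nonneg_left hly (Real.rpow_pos_of_pos hy0 _).le
      _ = T^α * P y := by rw [hPy]
      _ ≤ T^α * P T := mul_le_mul_of_nonneg_left (hPanti T y hTy) (Real.rpow_pos_of_pos hT0 _).le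
      _ = ℓ T := (hℓeq T hT0).symm

  -- the constant
  have hℓ2x₀ : 0 < ℓ (2*x₀) := hℓpos _ (by linarith)
  have h2x₀α : (0:ℝ) < (2*x₀)^α := Real.rpow_pos_of_pos (by linarith) _
  have h1q : (0:ℝ) < 1 - q := by linarith
  have h2α : (0:ℝ) < (2:ℝ)^α := Real.rpow_pos_of_pos two_pos _
  set CA : ℝ := 2 * (2*x₀)^α / ℓ (2*x₀) with hCA
  set CB : ℝ := 2 + 2*x₀/K + 2^α * ρ / (1 - q) with hCB
  have hCA0 : 0 < CA := by rw [hCA]; positivity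
  have hCB0 : 0 < CB := by
    rw [hCB]
    have g1 : (0:ℝ) < 2*x₀/K := div_pos (by linarith) hK0
    have g2 : (0:ℝ) < 2^α * ρ / (1 - q) := div_pos (by positivity) h1q
    linarith
  refine ⟨CA + CB, by linarith, ?_⟩
  intro s h hs hh hne
  set c : ℝ := ‖h‖ with hc
  have hc0 : 0 < c := norm_pos_iff.mpr hne
  have hc10 : (0:ℝ) < 1/c := by positivity
  have hℓc : 0 < ℓ (1/c) := hℓpos _ hc10
  have hcα : (0:ℝ) < c ^ α := Real.rpow_pos_of_pos hc0 _
  have hPc : c ^ α * ℓ (1/c) = P (1/c) := by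
    rw [hℓeq (1/c) hc10, one_div, Real.inv_rpow hc0.le, ← mul_assoc,
      mul_inv_cancel₀ (ne_of_gt hcα), one_mul]
  -- integrand facts
  have hmf : ∀ t : EuclideanSpace ℝ (Fin d),
      Measurable fun ω => Complex.exp ((⟪t, X ω⟫ : ℂ) * Complex.I) := by
    intro t
    exact Complex.continuous_exp.measurable.comp
      ((Complex.measurable_ofReal.comp (measurable_const.inner hXmeas)).mul_const Complex.I)
  have hnorm1 : ∀ (t : EuclideanSpace ℝ (Fin d)) (ω : Ω),
      ‖Complex.exp ((⟪t, X ω⟫ : ℂ) * Complex.I)‖ = 1 := by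
    intro t ω
    rw [Complex.norm_exp_ofReal_mul_I]
  have hintf : ∀ t : EuclideanSpace ℝ (Fin d),
      Integrable (fun ω => Complex.exp ((⟪t, X ω⟫ : ℂ) * Complex.I)) μ := by
    intro t
    exact (integrable_const 1).mono' (hmf t).aestronglyMeasurable
      (ae_of_all _ fun ω => le_of_eq (hnorm1 t ω))
  have hpt : ∀ ω, ‖Complex.exp ((⟪s + h, X ω⟫ : ℂ) * Complex.I)
      - Complex.exp ((⟪s, X ω⟫ : ℂ) * Complex.I)‖ ≤ min (c * ‖X ω‖) 2 := by
    intro ω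
    have hadd : (⟪s + h, X ω⟫ : ℝ) = ⟪s, X ω⟫ + ⟪h, X ω⟫ := inner_add_left _ _ _
    have hfac : Complex.exp ((⟪s + h, X ω⟫ : ℂ) * Complex.I)
        - Complex.exp ((⟪s, X ω⟫ : ℂ) * Complex.I)
        = Complex.exp ((⟪s, X ω⟫ : ℂ) * Complex.I)
          * (Complex.exp ((⟪h, X ω⟫ : ℂ) * Complex.I) - 1) := by
      rw [hadd]
      push_cast
      rw [add_mul, Complex.exp_add]
      ring
    rw [hfac, norm_mul, hnorm1 s ω, one_mul]
    apply le_min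
    · exact le_trans (norm_exp_mul_I_sub_one_le _) (abs_real_inner_le_norm h (X ω))
    · calc ‖Complex.exp ((⟪h, X ω⟫ : ℂ) * Complex.I) - 1‖
          ≤ ‖Complex.exp ((⟪h, X ω⟫ : ℂ) * Complex.I)‖ + ‖(1:ℂ)‖ := norm_sub_le _ _
        _ ≤ 2 := by rw [hnorm1 h ω]; norm_num
  have hnonneg : 0 ≤ c ^ α * ℓ (1/c) := le_of_lt (by positivity)
  rcases le_or_gt (1/c) (2*x₀) with hcase | hcase
  · -- easy case : 1/c ≤ 2x₀
    have hI : ∀ t : EuclideanSpace ℝ (Fin d),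
        ‖∫ ω, Complex.exp ((⟪t, X ω⟫ : ℂ) * Complex.I) ∂μ‖ ≤ 1 := by
      intro t
      calc ‖∫ ω, Complex.exp ((⟪t, X ω⟫ : ℂ) * Complex.I) ∂μ‖
          ≤ ∫ ω, ‖Complex.exp ((⟪t, X ω⟫ : ℂ) * Complex.I)‖ ∂μ :=
            norm_integral_le_integral_norm _
        _ = 1 := by
            simp only [hnorm1 t]
            simp
    have hLHS : ‖(∫ ω, Complex.exp ((⟪s + h, X ω⟫ : ℂ) * Complex.I) ∂μ)
        - ∫ ω, Complex.exp ((⟪s, X ω⟫ : ℂ) * Complex.I) ∂μ‖ ≤ 2 := by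
      calc ‖(∫ ω, Complex.exp ((⟪s + h, X ω⟫ : ℂ) * Complex.I) ∂μ)
          - ∫ ω, Complex.exp ((⟪s, X ω⟫ : ℂ) * Complex.I) ∂μ‖
          ≤ ‖∫ ω, Complex.exp ((⟪s + h, X ω⟫ : ℂ) * Complex.I) ∂μ‖
            + ‖∫ ω, Complex.exp ((⟪s, X ω⟫ : ℂ) * Complex.I) ∂μ‖ := norm_sub_le _ _
        _ ≤ 2 := by linarith [hI (s+h), hI s]
    have hone : (2*x₀:ℝ)^α * (2*x₀)^(-α) = 1 := by
      rw [← Real.rpow_add (by linarith)]; simp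
    have hP2x₀ : P (2*x₀) = (2*x₀)^(-α) * ℓ (2*x₀) := hℓtail _ (by linarith)
    have h2le : 2 ≤ CA * (c^α * ℓ (1/c)) := by
      rw [hPc]
      calc (2:ℝ) = CA * P (2*x₀) := by
            rw [hCA, hP2x₀, Real.rpow_neg (by linarith : (0:ℝ) ≤ 2*x₀)]
            field_simp
        _ ≤ CA * P (1/c) := mul_le_mul_of_nonneg_left (hPanti _ _ hcase) hCA0.le
    calc ‖(∫ ω, Complex.exp ((⟪s + h, X ω⟫ : ℂ) * Complex.I) ∂μ)
        - ∫ ω, Complex.exp ((⟪s, X ω⟫ : ℂ) * Complex.I) ∂μ‖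
        ≤ 2 := hLHS
      _ ≤ CA * (c^α * ℓ (1/c)) := h2le
      _ ≤ (CA + CB) * (c^α * ℓ (1/c)) :=
          mul_le_mul_of_nonneg_right (by linarith) hnonneg
      _ = (CA + CB) * c^α * ℓ (1/c) := by ring
  · -- main case : 2x₀ < 1/c
    set T : ℝ := 1/c with hTdef
    have hT0 : 0 < T := hc10
    have hx₀T : x₀ ≤ T := by linarith
    have hT1 : (1:ℝ) ≤ T := le_trans hx₀1 hx₀T
    have hcT : c = T⁻¹ := by rw [hTdef]; field_simp
    have hℓT : 0 < ℓ T := hℓpos _ hT0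
    have hTα : T^(-α) = c^α := by
      rw [hTdef, one_div, Real.inv_rpow hc0.le, Real.rpow_neg hc0.le, inv_inv]
    -- choose N
    have hr2 : (2:ℝ) ≤ T / x₀ := by rw [le_div_iff₀ hx₀0]; linarith
    obtain ⟨n, hn1, hn2⟩ := exists_nat_pow_near (le_trans one_le_two hr2) one_lt_two
    have hn0 : n ≠ 0 := by
      rintro rfl
      norm_num at hn2
      linarith
    set N : ℕ := n - 1 with hN
    have hNn : N + 1 = n := Nat.succ_pred_eq_of_pos (Nat.pos_of_ne_zero hn0)
    have hTN : x₀ ≤ T / 2^(N+1) := by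
      rw [le_div_iff₀ (by positivity)]
      rw [hNn]
      calc x₀ * 2^n = 2^n * x₀ := by ring
        _ ≤ (T / x₀) * x₀ := mul_le_mul_of_nonneg_right hn1 hx₀0.le
        _ = T := by field_simp
    have hTN2 : T / 2^(N+1) ≤ 2*x₀ := by
      rw [div_le_iff₀ (by positivity)]
      have h1 : T / x₀ < 2^(n+1) := hn2
      rw [div_lt_iff₀ hx₀0] at h1
      have h2 : T < 2*x₀*2^(N+1) := by
        calc T < 2^(n+1) * x₀ := h1
          _ = 2*x₀*2^(N+1) := by rw [← hNn]; ring
      linarith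
    -- shell estimate for ℓ
    have hshell : ∀ k : ℕ, k ≤ N → ℓ (T/2^(k+1)) ≤ ρ^(k+1) * ℓ T := by
      intro k hk
      have hmono : T / 2^(N+1) ≤ T / 2^(k+1) := by
        apply div_le_div_of_nonneg_left hT0.le (by positivity)
        exact pow_le_pow_right₀ one_le_two (by omega)
      have hge : x₀ ≤ T/2^(k+1) := le_trans hTN hmono
      have := hiter (k+1) (T/2^(k+1)) hge
      rwa [show (2:ℝ)^(k+1) * (T/2^(k+1)) = T from by field_simp] at this
    -- sets
    set A : Set Ω := {ω | ‖X ω‖ > T} with hA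
    set Bs : ℕ → Set Ω := fun k => {ω | ‖X ω‖ > T/2^(k+1)} with hBs
    have hPA : (μ A).toReal = P T := rfl
    have hPBs : ∀ k, (μ (Bs k)).toReal = P (T/2^(k+1)) := fun k => rfl
    have hBsm : ∀ k, MeasurableSet (Bs k) := fun k => hsetm _
    have hAm : MeasurableSet A := hsetm _
    -- pointwise bound by the integrable majorant
    have hGpt : ∀ ω, min (c * ‖X ω‖) 2 ≤ Set.indicator A (fun _ => (2:ℝ)) ω
        + (2*x₀*c + ∑ k ∈ Finset.range (N+1),
            Set.indicator (Bs k) (fun _ => c * (T/2^k)) ω) := by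
      intro ω
      have hindA : (0:ℝ) ≤ Set.indicator A (fun _ => (2:ℝ)) ω :=
        Set.indicator_nonneg (fun _ _ => by norm_num) _
      have hterm : ∀ k, (0:ℝ) ≤ Set.indicator (Bs k) (fun _ => c * (T/2^k)) ω :=
        fun k => Set.indicator_nonneg (fun _ _ => by positivity) _
      have hindsum : (0:ℝ) ≤ ∑ k ∈ Finset.range (N+1),
          Set.indicator (Bs k) (fun _ => c * (T/2^k)) ω :=
        Finset.sum_nonneg fun k _ => hterm k
      have h2x₀c : (0:ℝ) ≤ 2*x₀*c := by positivity
      by_cases hmemA : ω ∈ A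
      · calc min (c * ‖X ω‖) 2 ≤ 2 := min_le_right _ _
          _ = Set.indicator A (fun _ => (2:ℝ)) ω := by
              exact (Set.indicator_of_mem hmemA (fun _ => (2:ℝ))).symm
          _ ≤ _ := le_add_of_nonneg_right (by linarith)
      · have hXT : ‖X ω‖ ≤ T := le_of_not_gt hmemA
        by_cases hXsmall : ‖X ω‖ ≤ 2*x₀
        · calc min (c * ‖X ω‖) 2 ≤ c * ‖X ω‖ := min_le_left _ _
            _ ≤ c * (2*x₀) := mul_le_mul_of_nonneg_left hXsmall hc0.le
            _ = 2*x₀*c := by ring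
            _ ≤ _ := by linarith
        · push_neg at hXsmall
          have hex : ∃ k, T/2^(k+1) < ‖X ω‖ := ⟨N, lt_of_le_of_lt hTN2 hXsmall⟩
          obtain ⟨k, hk, hkmin⟩ : ∃ k, (T/2^(k+1) < ‖X ω‖) ∧ ∀ j < k, ¬(T/2^(j+1) < ‖X ω‖) :=
            ⟨Nat.find hex, Nat.find_spec hex, fun j hj => Nat.find_min hex hj⟩
          have hkN : k ≤ N := by
            by_contra hgt
            exact hkmin N (by omega) (lt_of_le_of_lt hTN2 hXsmall)
          have hk' : ‖X ω‖ ≤ T/2^k := by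
            rcases k with _ | j
            · simpa using hXT
            · exact le_of_not_gt (hkmin j (Nat.lt_succ_self j))
          have hωB : ω ∈ Bs k := hk
          calc min (c * ‖X ω‖) 2 ≤ c * ‖X ω‖ := min_le_left _ _
            _ ≤ c * (T/2^k) := mul_le_mul_of_nonneg_left hk' hc0.le
            _ = Set.indicator (Bs k) (fun _ => c * (T/2^k)) ω := by
                exact (Set.indicator_of_mem hωB (fun _ => c * (T/2^k))).symm
            _ ≤ ∑ j ∈ Finset.range (N+1),
                Set.indicator (Bs j) (fun _ => c * (T/2^j)) ω :=
                Finset.single_le_sum (fun j _ => hterm j)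
                  (Finset.mem_range.mpr (Nat.lt_succ_of_le hkN))
            _ ≤ _ := by linarith
    -- integrability of the majorant pieces
    have hint1 : Integrable (fun ω => Set.indicator A (fun _ => (2:ℝ)) ω) μ :=
      (integrable_const _).indicator hAm
    have hint3 : Integrable (fun ω => ∑ k ∈ Finset.range (N+1),
        Set.indicator (Bs k) (fun _ => c * (T/2^k)) ω) μ :=
      integrable_finset_sum _ fun k _ => (integrable_const _).indicator (hBsm k)
    have hint2 : Integrable (fun ω => 2*x₀*c + ∑ k ∈ Finset.range (N+1),
        Set.indicator (Bs k) (fun _ => c * (T/2^k)) ω) μ :=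
      (integrable_const _).add hint3
    -- the big estimate
    have hmain : ‖(∫ ω, Complex.exp ((⟪s + h, X ω⟫ : ℂ) * Complex.I) ∂μ)
        - ∫ ω, Complex.exp ((⟪s, X ω⟫ : ℂ) * Complex.I) ∂μ‖
        ≤ 2 * P T + (2*x₀*c + ∑ k ∈ Finset.range (N+1),
            c * (T/2^k) * P (T/2^(k+1))) := by
      calc ‖(∫ ω, Complex.exp ((⟪s + h, X ω⟫ : ℂ) * Complex.I) ∂μ)
          - ∫ ω, Complex.exp ((⟪s, X ω⟫ : ℂ) * Complex.I) ∂μ‖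
          = ‖∫ ω, (Complex.exp ((⟪s + h, X ω⟫ : ℂ) * Complex.I)
              - Complex.exp ((⟪s, X ω⟫ : ℂ) * Complex.I)) ∂μ‖ := by
            rw [integral_sub (hintf (s+h)) (hintf s)]
        _ ≤ ∫ ω, ‖Complex.exp ((⟪s + h, X ω⟫ : ℂ) * Complex.I)
              - Complex.exp ((⟪s, X ω⟫ : ℂ) * Complex.I)‖ ∂μ :=
            norm_integral_le_integral_norm _
        _ ≤ ∫ ω, (Set.indicator A (fun _ => (2:ℝ)) ω
              + (2*x₀*c + ∑ k ∈ Finset.range (N+1),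
                  Set.indicator (Bs k) (fun _ => c * (T/2^k)) ω)) ∂μ := by
            apply integral_mono ((hintf (s+h)).sub (hintf s)).norm (hint1.add hint2)
            exact fun ω => le_trans (hpt ω) (hGpt ω)
        _ = 2 * P T + (2*x₀*c + ∑ k ∈ Finset.range (N+1),
              c * (T/2^k) * P (T/2^(k+1))) := by
            rw [integral_add hint1 hint2, integral_add (integrable_const _) hint3,
              integral_finset_sum _ (fun k _ => (integrable_const _).indicator (hBsm k)),
              integral_indicator_const _ hAm, integral_const]
            simp only [measure_univ, ENNReal.toReal_one, one_smul, smul_eq_mul]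
            congr 1
            · rw [show μ.real A = P T from rfl]; ring
            congr 1
            · rw [show μ.real Set.univ = 1 from by simp, one_mul]
            apply Finset.sum_congr rfl
            intro k _
            rw [integral_indicator_const _ (hBsm k), smul_eq_mul,
              show μ.real (Bs k) = P (T/2^(k+1)) from rfl]
            ring
    -- term (i)
    have hti : 2 * P T ≤ 2 * (c^α * ℓ T) := by
      have hPTe : P T = c^α * ℓ T := by
        show (μ {ω | ‖X ω‖ > T}).toReal = c^α * ℓ T
        rw [hℓtail T hT0, hTα]
      rw [hPTe]
    -- term (ii)
    have htii : 2*x₀*c ≤ (2*x₀/K) * (c^α * ℓ T) := by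
      have hlo := hlow T hx₀T
      have hc1 : c ≤ c^α * T^(-β) := by
        have he : T^(-(1:ℝ)) ≤ T^(-(α+β)) :=
          Real.rpow_le_rpow_of_exponent_le hT1 (by rw [hβ]; linarith)
        calc c = T^(-(1:ℝ)) := by rw [Real.rpow_neg_one]; exact hcT
          _ ≤ T^(-(α+β)) := he
          _ = T^(-α) * T^(-β) := by rw [← Real.rpow_add hT0]; congr 1; ring
          _ = c^α * T^(-β) := by rw [hTα]
      have hTβ : T^(-β) ≤ ℓ T / K := by
        rw [le_div_iff₀ hK0]
        nlinarith
      calc 2*x₀*c ≤ 2*x₀*(c^α * T^(-β)) :=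
            mul_le_mul_of_nonneg_left hc1 (by linarith)
        _ ≤ 2*x₀*(c^α * (ℓ T / K)) := by
            apply mul_le_mul_of_nonneg_left _ (by linarith)
            exact mul_le_mul_of_nonneg_left hTβ hcα.le
        _ = (2*x₀/K) * (c^α * ℓ T) := by field_simp <;> ring
    -- term (iii)
    have htiii : ∑ k ∈ Finset.range (N+1), c * (T/2^k) * P (T/2^(k+1))
        ≤ (2^α * ρ / (1 - q)) * (c^α * ℓ T) := by
      have hterm : ∀ k ∈ Finset.range (N+1),
          c * (T/2^k) * P (T/2^(k+1)) ≤ (c^α * ℓ T) * (2^α * ρ) * q^k := by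
        intro k hkmem
        have hk : k ≤ N := Nat.lt_succ_iff.mp (Finset.mem_range.mp hkmem)
        have hTk0 : (0:ℝ) < T/2^(k+1) := by positivity
        have hPk : P (T/2^(k+1)) = (T/2^(k+1))^(-α) * ℓ (T/2^(k+1)) := hℓtail _ hTk0
        have hE : c * (T/2^k) * ((T/2^(k+1))^(-α) * ρ^(k+1)) = c^α * (2^α * ρ) * q^k := by
          have e1 : (T/2^(k+1))^(-α) = T^(-α) * ((2:ℝ)^(k+1))^α := by
            rw [Real.div_rpow hT0.le (by positivity), Real.rpow_neg (by positivity : (0:ℝ) ≤ (2:ℝ)^(k+1)), div_inv_eq_mul]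
          have e4 : ((2:ℝ)^k)^α * ρ^k / 2^k = q^k := by
            have b0 : ((2:ℝ)^k : ℝ) = 2^((k:ℝ)) := (Real.rpow_natCast 2 k).symm
            rw [hρ, hq, b0, ← Real.rpow_mul two_pos.le,
              ← Real.rpow_natCast ((2:ℝ)^β) k, ← Real.rpow_mul two_pos.le,
              ← Real.rpow_natCast ((2:ℝ)^(-β)) k, ← Real.rpow_mul two_pos.le,
              div_eq_mul_inv, ← Real.rpow_neg two_pos.le, ← Real.rpow_add two_pos,
              ← Real.rpow_add two_pos]
            congr 1
            rw [hβ]; push_cast; ring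
          have hcT1 : c * T = 1 := by rw [hcT]; field_simp
          have e5 : c * T * T^(-α) = c^α := by
            rw [hcT1, one_mul, hTα]
          have e2 : ((2:ℝ)^(k+1))^α = 2^α * ((2:ℝ)^k)^α := by
            rw [pow_succ, Real.mul_rpow (by positivity) two_pos.le, mul_comm]
          rw [e1, e2, pow_succ ρ k]
          linear_combination ((2:ℝ)^α * ρ * (((2:ℝ)^k)^α * ρ^k / 2^k)) * e5
            + ((2:ℝ)^α * ρ * c^α) * e4
        calc c * (T/2^k) * P (T/2^(k+1))
            ≤ c * (T/2^k) * ((T/2^(k+1))^(-α) * (ρ^(k+1) * ℓ T)) := by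
              rw [hPk]
              apply mul_le_mul_of_nonneg_left _ (by positivity)
              apply mul_le_mul_of_nonneg_left (hshell k hk)
                (Real.rpow_pos_of_pos hTk0 _).le
          _ = (c * (T/2^k) * ((T/2^(k+1))^(-α) * ρ^(k+1))) * ℓ T := by ring
          _ = (c^α * (2^α * ρ) * q^k) * ℓ T := by rw [hE]
          _ = (c^α * ℓ T) * (2^α * ρ) * q^k := by ring
      calc ∑ k ∈ Finset.range (N+1), c * (T/2^k) * P (T/2^(k+1))
          ≤ ∑ k ∈ Finset.range (N+1), (c^α * ℓ T) * (2^α * ρ) * q^k :=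
            Finset.sum_le_sum hterm
        _ = ((c^α * ℓ T) * (2^α * ρ)) * ∑ k ∈ Finset.range (N+1), q^k := by
            rw [Finset.mul_sum]
        _ ≤ ((c^α * ℓ T) * (2^α * ρ)) * (1-q)⁻¹ := by
            apply mul_le_mul_of_nonneg_left _ (by positivity)
            calc ∑ k ∈ Finset.range (N+1), q^k ≤ ∑' k : ℕ, q^k :=
                  Summable.sum_le_tsum _ (fun k _ => (pow_pos hq0 k).le)
                    (summable_geometric_of_lt_one hq0.le hq1)
              _ = (1-q)⁻¹ := tsum_geometric_of_lt_one hq0.le hq1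
        _ = (2^α * ρ / (1 - q)) * (c^α * ℓ T) := by field_simp
    have hfinal : 2 * P T + (2*x₀*c + ∑ k ∈ Finset.range (N+1),
        c * (T/2^k) * P (T/2^(k+1))) ≤ CB * (c^α * ℓ T) := by
      rw [hCB]
      calc 2 * P T + (2*x₀*c + ∑ k ∈ Finset.range (N+1), c * (T/2^k) * P (T/2^(k+1)))
          ≤ 2 * (c^α * ℓ T) + ((2*x₀/K) * (c^α * ℓ T) + (2^α * ρ / (1 - q)) * (c^α * ℓ T)) := by
            linarith
        _ = (2 + 2*x₀/K + 2^α * ρ / (1 - q)) * (c^α * ℓ T) := by ring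
    calc ‖(∫ ω, Complex.exp ((⟪s + h, X ω⟫ : ℂ) * Complex.I) ∂μ)
        - ∫ ω, Complex.exp ((⟪s, X ω⟫ : ℂ) * Complex.I) ∂μ‖
        ≤ 2 * P T + (2*x₀*c + ∑ k ∈ Finset.range (N+1),
            c * (T/2^k) * P (T/2^(k+1))) := hmain
      _ ≤ CB * (c^α * ℓ T) := hfinal
      _ ≤ (CA + CB) * (c^α * ℓ T) :=
          mul_le_mul_of_nonneg_right (by linarith) (by positivity)
      _ = (CA + CB) * c^α * ℓ T := by ring
end

section
/- Let X be an ℝ^d-valued random variable and S_n = X_1 + ⋯ + X_n the sum of n independent copies of X, with characteristic function Ψ(s) = E[e^{i s·X}]. Then for all n ≥ 1 and x ∈ ℝ^d, P(S_n ∈ Π_1(x)) ≤ Re ∫_{ℝ^d} e^{-i s·x}·r(s)·Ψ(s)^n ds. -/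
/-!
Write `F(a) = ½ ∫_{a-1}^{a+1} γ₀` for the average of `γ₀` over a box of width 2. Since `γ₀ ≥ 0`
everywhere and `γ₀ ≥ 1` on `[-2, 2]`, the indicator of the cube `Π₁(x)` is dominated by
`∏ⱼ F(yⱼ - xⱼ)`. Fourier inversion gives `γ₀(t) = (2π)⁻¹ ∫ γ̂₀(s) e^{ist} ds`, and averaging
`e^{ist}` over `t ∈ (a - 1, a + 1]` yields `sinc(s) e^{isa}`; hence `F(a) = ∫ r₀(s) e^{isa} ds`
and `∏ⱼ F(yⱼ - xⱼ) = ∫ r(s) e^{i⟪s, y - x⟫} ds`. Taking expectations at `y = Sₙ` and exchanging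
the integrals (`r` is integrable) leaves `E e^{i⟪s, Sₙ⟫} = Ψ(s)ⁿ`, by independence.
-/

open MeasureTheory Filter
open scoped RealInnerProductSpace

open Complex

/- `∫ exp (-(ξ * x) * I) * f x` is Mathlib's `𝓕 f (ξ / (2 * π))`. -/
open Real FourierTransform in
theorem fourier_inversion_angular {f g : ℝ → ℂ} (hf : Continuous f) (hfi : Integrable f)
    (hgi : Integrable g) (hfg : ∀ ξ : ℝ, ∫ x : ℝ, exp (-(ξ * x) * I) * f x = g ξ) (u : ℝ) :
    f u = (2 * π)⁻¹ • ∫ s : ℝ, g s * exp (s * u * I) := by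
  have hfourier : 𝓕 f = fun ξ ↦ g (2 * π * ξ) := by
    ext ξ
    rw [Real.fourier_eq', ← hfg]
    congr 1 with x
    rw [smul_eq_mul, mul_comm, Real.inner_apply]
    push_cast
    ring_nf
  have hinv := hf.fourierInv_fourier_eq hfi (hfourier ▸ hgi.comp_mul_left' (by positivity))
  rw [← congrFun hinv u, Real.fourierInv_eq', hfourier,
    ← abs_of_pos (by positivity : (0 : ℝ) < (2 * π)⁻¹),
    ← Measure.integral_comp_mul_left (fun s : ℝ ↦ g s * exp (s * u * I))]
  congr 1 with ξ
  rw [smul_eq_mul, mul_comm, Real.inner_apply]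
  push_cast
  ring_nf

theorem integral_Ioc_exp_mul_I (s a : ℝ) :
    ∫ t in Set.Ioc (a - 1) (a + 1), exp (s * t * I) = 2 * Real.sinc s * exp (s * a * I) := by
  rw [← intervalIntegral.integral_of_le (by linarith)]
  rcases eq_or_ne s 0 with rfl | hs
  · simp
    ring
  have hsI : (s * I : ℂ) ≠ 0 := mul_ne_zero (ofReal_ne_zero.2 hs) I_ne_zero
  simp only [mul_right_comm _ _ I]
  rw [integral_exp_mul_complex hsI, Real.sinc_of_ne_zero hs]
  have hsplit : ∀ c : ℂ, exp (s * I * (a + c)) = exp (s * a * I) * exp (c * s * I) := by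
    intro c
    rw [← exp_add]
    ring_nf
  push_cast
  rw [sub_eq_add_neg (a : ℂ), hsplit, hsplit, Complex.sin, ← mul_sub]
  field_simp
  ring_nf
  rw [I_sq]
  ring

section Fubini

variable {E : Type*} [NormedAddCommGroup E] [InnerProductSpace ℝ E] [MeasurableSpace E]
  [OpensMeasurableSpace E] [SecondCountableTopology E]
  {μ : Measure E} [IsFiniteMeasure μ] {ν : Measure E} {R : E → ℂ}

theorem integrable_mul_exp_inner (hR : Integrable R ν) :
    Integrable (Function.uncurry fun y s ↦ R s * exp (⟪s, y⟫ * I)) (μ.prod ν) := by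
  have hmeas : AEStronglyMeasurable (fun p : E × E ↦ R p.2 * exp (⟪p.2, p.1⟫ * I))
      (μ.prod ν) :=
    hR.1.comp_snd.mul (by fun_prop)
  refine ((integrable_const (1 : ℝ)).mul_prod hR.norm).mono' hmeas (.of_forall fun p ↦ ?_)
  simp [Function.uncurry_def, norm_exp_ofReal_mul_I]

theorem integral_integral_mul_exp_inner_swap [SFinite ν] (hR : Integrable R ν) :
    ∫ y, ∫ s, R s * exp (⟪s, y⟫ * I) ∂ν ∂μ = ∫ s, R s * ∫ y, exp (⟪s, y⟫ * I) ∂μ ∂ν := by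
  simp_rw [← integral_const_mul]
  exact integral_integral_swap (integrable_mul_exp_inner hR)

end Fubini

noncomputable def boxAverage (γ : ℝ → ℝ) (a : ℝ) : ℝ :=
  2⁻¹ * ∫ t in Set.Ioc (a - 1) (a + 1), γ t

theorem boxAverage_nonneg {γ : ℝ → ℝ} (hγ : ∀ x, 0 ≤ γ x) (a : ℝ) : 0 ≤ boxAverage γ a :=
  mul_nonneg (by norm_num) (setIntegral_nonneg measurableSet_Ioc fun t _ ↦ hγ t)

theorem one_le_boxAverage {γ : ℝ → ℝ} (hγi : Integrable γ)
    (hγ : ∀ x ∈ Set.Icc (-2 : ℝ) 2, 1 ≤ γ x) {a : ℝ} (ha : a ∈ Set.Ioc (-1) 1) :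
    1 ≤ boxAverage γ a := by
  have hmono : ∫ t in Set.Ioc (a - 1) (a + 1), (1 : ℝ) ≤ ∫ t in Set.Ioc (a - 1) (a + 1), γ t :=
    setIntegral_mono_on (integrableOn_const measure_Ioc_lt_top.ne) hγi.integrableOn
      measurableSet_Ioc fun t ht ↦ hγ t ⟨by linarith [ha.1, ht.1], by linarith [ha.2, ht.2]⟩
  rw [setIntegral_const, measureReal_def, Real.volume_Ioc, ENNReal.toReal_ofReal (by linarith),
    smul_eq_mul, mul_one] at hmono
  rw [boxAverage]
  linarith

theorem boxAverage_eq_integral {γ g : ℝ → ℝ} (hγ : Continuous γ) (hγi : Integrable γ)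
    (hgi : Integrable g) (hγg : ∀ ξ : ℝ, ∫ x : ℝ, exp (-(ξ * x) * I) * γ x = g ξ) (a : ℝ) :
    (boxAverage γ a : ℂ)
      = ∫ s : ℝ, ((2 * Real.pi)⁻¹ * Real.sinc s * g s : ℝ) * exp (s * a * I) := by
  have hinv := fourier_inversion_angular (f := fun x ↦ (γ x : ℂ)) (by fun_prop) hγi.ofReal
    hgi.ofReal hγg
  have hswap : ∫ t in Set.Ioc (a - 1) (a + 1), ∫ s : ℝ, (g s : ℂ) * exp (s * t * I)
      = ∫ s : ℝ, g s * ∫ t in Set.Ioc (a - 1) (a + 1), exp (s * t * I) := by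
    have := integral_integral_mul_exp_inner_swap
      (μ := volume.restrict (Set.Ioc (a - 1) (a + 1))) hgi.ofReal
    simp only [Real.inner_apply, ofReal_mul] at this
    exact this
  have hγI : ∫ t in Set.Ioc (a - 1) (a + 1), (γ t : ℂ)
      = (2 * Real.pi)⁻¹ • ∫ s : ℝ, g s * ∫ t in Set.Ioc (a - 1) (a + 1), exp (s * t * I) := by
    rw [integral_congr_ae (.of_forall hinv), integral_smul]
    exact congrArg _ hswap
  calc (boxAverage γ a : ℂ) = 2⁻¹ * ∫ t in Set.Ioc (a - 1) (a + 1), (γ t : ℂ) := by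
        rw [boxAverage, ofReal_mul, ← integral_complex_ofReal]
        norm_num
    _ = 2⁻¹ * (2 * Real.pi)⁻¹ • ∫ s : ℝ, g s * (2 * Real.sinc s * exp (s * a * I)) := by
        simp_rw [hγI, integral_Ioc_exp_mul_I]
    _ = _ := by
        rw [Complex.real_smul, ← integral_const_mul, ← integral_const_mul]
        congr 1 with s
        push_cast
        ring

section Cube

variable {ι : Type*} [Fintype ι]

def cube (x : EuclideanSpace ℝ ι) (h : ℝ) : Set (EuclideanSpace ℝ ι) :=
  {y | ∀ j, y j ∈ Set.Ioc (x j - h) (x j + h)}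

theorem measurableSet_cube (x : EuclideanSpace ℝ ι) (h : ℝ) : MeasurableSet (cube x h) := by
  simp only [cube, Set.ofPred_forall]
  exact .iInter fun j ↦ measurableSet_Ioc.preimage (by fun_prop)

theorem EuclideanSpace.integral_prod_eq_prod_integral {𝕜 : Type*} [RCLike 𝕜]
    (f : ι → ℝ → 𝕜) :
    ∫ s : EuclideanSpace ℝ ι, ∏ j, f j (s j) = ∏ j, ∫ u, f j u := by
  rw [← (PiLp.volume_preserving_toLp ι).integral_comp
    (MeasurableEquiv.toLp 2 _).measurableEmbedding]
  exact integral_fintype_prod_eq_prod f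

theorem EuclideanSpace.integrable_prod {𝕜 : Type*} [RCLike 𝕜]
    {f : ι → ℝ → 𝕜} (hf : ∀ j, Integrable (f j)) :
    Integrable (fun s : EuclideanSpace ℝ ι ↦ ∏ j, f j (s j)) := by
  rw [← (PiLp.volume_preserving_toLp ι).integrable_comp_emb
    (MeasurableEquiv.toLp 2 _).measurableEmbedding]
  exact Integrable.fintype_prod hf

theorem prod_integral_mul_exp_eq_integral_prod_mul_exp_inner (r : ℝ → ℂ)
    (y : EuclideanSpace ℝ ι) :
    ∏ j, ∫ u : ℝ, r u * exp (u * y j * I)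
      = ∫ s : EuclideanSpace ℝ ι, (∏ j, r (s j)) * exp (⟪s, y⟫ * I) := by
  rw [← EuclideanSpace.integral_prod_eq_prod_integral]
  congr 1 with s
  rw [Finset.prod_mul_distrib, ← exp_sum, EuclideanSpace.inner_eq_star_dotProduct]
  simp [dotProduct, Finset.mul_sum, mul_comm]

theorem indicator_cube_le_prod_boxAverage {γ : ℝ → ℝ} (hγi : Integrable γ)
    (hγ0 : ∀ x, 0 ≤ γ x) (hγ1 : ∀ x ∈ Set.Icc (-2 : ℝ) 2, 1 ≤ γ x)
    (x y : EuclideanSpace ℝ ι) :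
    (cube x 1).indicator 1 y ≤ ∏ j, boxAverage γ (y j - x j) := by
  by_cases hy : y ∈ cube x 1
  · rw [Set.indicator_of_mem hy]
    refine Finset.one_le_prod fun j _ ↦ one_le_boxAverage hγi hγ1 ?_
    constructor <;> linarith [(hy j).1, (hy j).2]
  · rw [Set.indicator_of_notMem hy]
    exact Finset.prod_nonneg fun j _ ↦ boxAverage_nonneg hγ0 _

theorem measureReal_cube_le_re_integral (μ : Measure (EuclideanSpace ℝ ι))
    [IsFiniteMeasure μ] {γ r : ℝ → ℝ}
    (hγi : Integrable γ) (hγ0 : ∀ x, 0 ≤ γ x) (hγ1 : ∀ x ∈ Set.Icc (-2 : ℝ) 2, 1 ≤ γ x)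
    (hri : Integrable r) (hγr : ∀ a, (boxAverage γ a : ℂ) = ∫ u, r u * exp (u * a * I))
    (x : EuclideanSpace ℝ ι) :
    μ.real (cube x 1)
      ≤ (∫ s, exp (-⟪s, x⟫ * I) * ((∏ j, r (s j) : ℝ) : ℂ) * charFun μ s).re := by
  set R : EuclideanSpace ℝ ι → ℂ := fun s ↦ exp (-⟪s, x⟫ * I) * ((∏ j, r (s j) : ℝ) : ℂ)
  have hR : Integrable R := by
    refine (EuclideanSpace.integrable_prod fun _ ↦ hri.ofReal (𝕜 := ℂ)).bdd_mul (c := 1)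
      (f := fun s ↦ exp (-⟪s, x⟫ * I)) (by fun_prop) (.of_forall fun s ↦ ?_)
      |>.congr (.of_forall fun s ↦ ?_)
    · rw [← ofReal_neg, norm_exp_ofReal_mul_I]
    · simp [R]
  have hW : ∀ y, ((∏ j, boxAverage γ (y j - x j) : ℝ) : ℂ) = ∫ s, R s * exp (⟪s, y⟫ * I) := by
    intro y
    push_cast
    simp_rw [hγr, ← PiLp.sub_apply, prod_integral_mul_exp_eq_integral_prod_mul_exp_inner]
    congr 1 with s
    simp only [R, inner_sub_right, ofReal_sub, ofReal_prod]
    rw [sub_mul, sub_eq_add_neg, exp_add, ← neg_mul]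
    ring
  have hWi : Integrable (fun y ↦ ∏ j, boxAverage γ (y j - x j)) μ := by
    refine ((integrable_mul_exp_inner hR).integral_prod_left.re).congr (.of_forall fun y ↦ ?_)
    simp only [Function.uncurry_apply_pair, RCLike.re_to_complex, ← hW, ofReal_re]
  calc μ.real (cube x 1) = ∫ y, (cube x 1).indicator 1 y ∂μ :=
        (integral_indicator_one (measurableSet_cube x 1)).symm
    _ ≤ ∫ y, ∏ j, boxAverage γ (y j - x j) ∂μ :=
        integral_mono_of_nonneg (.of_forall fun y ↦ Set.indicator_nonneg (by simp) y) hWi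
          (.of_forall (indicator_cube_le_prod_boxAverage hγi hγ0 hγ1 x))
    _ = (∫ y, (∫ s, R s * exp (⟪s, y⟫ * I)) ∂μ).re := by
        simp_rw [← hW, integral_complex_ofReal, ofReal_re]
    _ = _ := by
        refine (congrArg re (integral_integral_mul_exp_inner_swap hR)).trans ?_
        simp [R, charFun_apply, real_inner_comm]

end Cube

open ProbabilityTheory in
theorem charFun_map_sum_range_eq_pow {Ω E : Type*} [MeasurableSpace Ω] {μ : Measure Ω}
    [NormedAddCommGroup E] [InnerProductSpace ℝ E] [MeasurableSpace E] [BorelSpace E]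
    [SecondCountableTopology E] {X : ℕ → Ω → E} (hX : ∀ i, AEMeasurable (X i) μ)
    (hindep : iIndepFun X μ) (hident : ∀ i, IdentDistrib (X i) (X 0) μ μ) (n : ℕ) :
    charFun (μ.map fun ω ↦ ∑ i ∈ Finset.range n, X i ω) = charFun (μ.map (X 0)) ^ n := by
  rw [(iIndepFun_iff_finset.1 hindep _).charFun_map_fun_finsetSum_eq_prod fun i _ ↦ hX i]
  simp [(hident _).map_eq]

theorem prob_cube_le_re_integral_general
    {Ω : Type*} [MeasurableSpace Ω] (μ : Measure Ω) [IsProbabilityMeasure μ]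
    (d : ℕ)
    (X : ℕ → Ω → EuclideanSpace ℝ (Fin d)) (hXmeas : ∀ i, Measurable (X i))
    (hindep : ProbabilityTheory.iIndepFun X μ)
    (hident : ∀ i, ProbabilityTheory.IdentDistrib (X i) (X 0) μ μ)
    (ε : ℝ)
    (γ₀ : ℝ → ℝ) (g : ℝ → ℝ)
    (hγcont : Continuous γ₀) (hγint : Integrable γ₀) (hγnonneg : ∀ x, 0 ≤ γ₀ x)
    (hγone : ∀ x ∈ Set.Icc (-2 : ℝ) 2, 1 ≤ γ₀ x)
    (hγhat : ∀ ξ : ℝ, (∫ x : ℝ, Complex.exp (-((ξ : ℂ) * (x : ℂ)) * Complex.I) * (γ₀ x : ℂ))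
      = (g ξ : ℂ))
    (hgC2 : ContDiff ℝ 2 g)
    (hgsupp : Function.support g ⊆ Set.Icc (-ε) ε)
    (r₀ : ℝ → ℝ)
    (hr₀ : ∀ s : ℝ, s ≠ 0 → r₀ s = (1 / (2 * Real.pi)) * (Real.sin s / s) * g s)
    (hr₀0 : r₀ 0 = (1 / (2 * Real.pi)) * g 0) :
    ∀ n : ℕ, 1 ≤ n → ∀ x : EuclideanSpace ℝ (Fin d),
      (μ {ω | ∀ j, (∑ i ∈ Finset.range n, X i ω) j ∈ Set.Ioc (x j - 1) (x j + 1)}).toReal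
        ≤ (∫ s : EuclideanSpace ℝ (Fin d),
            Complex.exp (-(⟪s, x⟫ : ℂ) * Complex.I) * ((∏ j, r₀ (s j) : ℝ) : ℂ)
              * (∫ ω, Complex.exp ((⟪s, X 0 ω⟫ : ℂ) * Complex.I) ∂μ) ^ n).re := by
  intro n _ x
  have hg : Continuous g := hgC2.continuous
  have hgK : HasCompactSupport g :=
    .intro isCompact_Icc fun t ht ↦ Function.notMem_support.1 (mt (@hgsupp t) ht)
  have hr₀_eq : r₀ = fun s ↦ (2 * Real.pi)⁻¹ * Real.sinc s * g s := by
    funext s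
    rcases eq_or_ne s 0 with rfl | hs
    · simp [hr₀0]
    · rw [hr₀ s hs, Real.sinc_of_ne_zero hs]
      ring
  have hr₀i : Integrable r₀ := by
    rw [hr₀_eq]
    exact ((continuous_const.mul Real.continuous_sinc).mul hg).integrable_of_hasCompactSupport
      hgK.mul_left
  have hF : ∀ a, (boxAverage γ₀ a : ℂ) = ∫ u, r₀ u * exp (u * a * I) := by
    rw [hr₀_eq]
    exact boxAverage_eq_integral hγcont hγint (hg.integrable_of_hasCompactSupport hgK) hγhat
  have hS : Measurable fun ω ↦ ∑ i ∈ Finset.range n, X i ω := by fun_prop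
  have hΨ : ∀ s, charFun (μ.map (X 0)) s = ∫ ω, exp (⟪s, X 0 ω⟫ * I) ∂μ := fun s ↦ by
    rw [charFun_apply, integral_map (hXmeas 0).aemeasurable (by fun_prop)]
    simp [real_inner_comm]
  calc (μ {ω | ∀ j, (∑ i ∈ Finset.range n, X i ω) j ∈ Set.Ioc (x j - 1) (x j + 1)}).toReal
      = (μ.map fun ω ↦ ∑ i ∈ Finset.range n, X i ω).real (cube x 1) := by
        rw [measureReal_def, Measure.map_apply hS (measurableSet_cube x 1)]
        rfl
    _ ≤ _ := measureReal_cube_le_re_integral _ hγint hγnonneg hγone hr₀i hF x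
    _ = _ := by
        rw [charFun_map_sum_range_eq_pow (fun i ↦ (hXmeas i).aemeasurable) hindep hident]
        simp only [Pi.pow_apply, hΨ]

/-- Lemma `lemma-iidgamma`: smoothing bound for the probability that `S_n` lies in a cube. -/
theorem prob_cube_le_re_integral
    {Ω : Type*} [MeasurableSpace Ω] (μ : Measure Ω) [IsProbabilityMeasure μ]
    (d : ℕ) (hd : 0 < d)
    (X : ℕ → Ω → EuclideanSpace ℝ (Fin d)) (hXmeas : ∀ i, Measurable (X i))
    (hindep : ProbabilityTheory.iIndepFun X μ)
    (hident : ∀ i, ProbabilityTheory.IdentDistrib (X i) (X 0) μ μ)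
    (ε : ℝ) (hε : 0 < ε)
    (γ₀ : ℝ → ℝ) (g : ℝ → ℝ)
    (hγcont : Continuous γ₀) (hγint : Integrable γ₀) (hγnonneg : ∀ x, 0 ≤ γ₀ x)
    (hγone : ∀ x ∈ Set.Icc (-2 : ℝ) 2, 1 ≤ γ₀ x)
    (hγhat : ∀ ξ : ℝ, (∫ x : ℝ, Complex.exp (-((ξ : ℂ) * (x : ℂ)) * Complex.I) * (γ₀ x : ℂ))
      = (g ξ : ℂ))
    (hgeven : ∀ ξ : ℝ, g (-ξ) = g ξ)
    (hgC2 : ContDiff ℝ 2 g)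
    (hgsupp : Function.support g ⊆ Set.Icc (-ε) ε)
    (r₀ : ℝ → ℝ)
    (hr₀ : ∀ s : ℝ, s ≠ 0 → r₀ s = (1 / (2 * Real.pi)) * (Real.sin s / s) * g s)
    (hr₀0 : r₀ 0 = (1 / (2 * Real.pi)) * g 0) :
    ∀ n : ℕ, 1 ≤ n → ∀ x : EuclideanSpace ℝ (Fin d),
      (μ {ω | ∀ j, (∑ i ∈ Finset.range n, X i ω) j ∈ Set.Ioc (x j - 1) (x j + 1)}).toReal
        ≤ (∫ s : EuclideanSpace ℝ (Fin d),
            Complex.exp (-(⟪s, x⟫ : ℂ) * Complex.I) * ((∏ j, r₀ (s j) : ℝ) : ℂ)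
              * (∫ ω, Complex.exp ((⟪s, X 0 ω⟫ : ℂ) * Complex.I) ∂μ) ^ n).re :=
  prob_cube_le_re_integral_general μ d X hXmeas hindep hident ε γ₀ g hγcont hγint hγnonneg hγone
    hγhat hgC2 hgsupp r₀ hr₀ hr₀0
end

section
/- For all x, y ∈ ℝ^d, the indicator 1_{Π_1(x)}(y) satisfies 1_{Π_1(x)}(y) ≤ Re ∫_{ℝ^d} e^{-i s·x}·r(s)·e^{i s·y} ds. -/
/-!
Since `sin s / s = ½ ∫_{-1}^{1} e^{isu} du`, Fubini and Fourier inversion turn the one-dimensional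
integral `∫ r₀(s) e^{ist} ds` into the average of `γ₀` over `[t - 1, t + 1]`. The `d`-dimensional
integral factorises into the product of these averages at `t = y_j - x_j`; each factor is
nonnegative, and at least `1` when `|t| ≤ 1` because `γ₀ ≥ 1` on `[-2, 2]`.
-/

open MeasureTheory Filter
open scoped RealInnerProductSpace
open FourierTransform Real Complex

/-- Mathlib's `𝓕` uses `e^{-2πiξx}`; the substitution `ξ ↦ 2πξ` turns its inversion theorem into
this one for the transform `∫ e^{-iξx} f x dx`. -/
theorem fourier_inversion_angular_s11 {f F : ℝ → ℂ} (hf : Integrable f)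
    (hF : ∀ ξ : ℝ, ∫ x : ℝ, exp (-((ξ : ℂ) * x) * I) * f x = F ξ) (hFi : Integrable F)
    {t : ℝ} (ht : ContinuousAt f t) :
    (2 * π : ℂ)⁻¹ * ∫ ξ : ℝ, F ξ * exp (ξ * t * I) = f t := by
  have h2π : 2 * π ≠ 0 := by positivity
  have hfourier : 𝓕 f = fun ξ => F (2 * π * ξ) := by
    ext ξ
    rw [Real.fourier_real_eq, ← hF]
    congr 1 with x
    rw [Circle.smul_def, Real.fourierChar_apply, smul_eq_mul]
    push_cast
    ring_nf
  have hinv := hf.fourierInv_fourier_eq (by rw [hfourier]; exact hFi.comp_mul_left' h2π) ht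
  have hrescale : (fun v : ℝ => 𝐞 ⟪v, t⟫ • F (2 * π * v))
      = fun v => (fun η : ℝ => F η * exp (η * t * I)) (2 * π * v) := by
    ext v
    rw [Circle.smul_def, Real.fourierChar_apply, smul_eq_mul, real_inner_comm,
      RCLike.inner_apply, conj_trivial]
    push_cast
    ring_nf
  rw [← hinv, Real.fourierInv_eq, hfourier, hrescale,
    Measure.integral_comp_mul_left (fun η : ℝ => F η * exp (η * t * I)),
    abs_of_pos (by positivity), Complex.real_smul]
  push_cast
  rfl

theorem integral_exp_mul_I_eq_sin_div {s : ℝ} (hs : s ≠ 0) :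
    ∫ u in (-1 : ℝ)..1, exp (s * u * I) = 2 * (Real.sin s / s : ℝ) := by
  have hsI : (s : ℂ) * I ≠ 0 := mul_ne_zero (ofReal_ne_zero.2 hs) I_ne_zero
  simp_rw [mul_right_comm _ _ I]
  rw [integral_exp_mul_complex hsI]
  push_cast
  rw [Complex.sin]
  field_simp
  ring_nf
  rw [I_sq]
  ring

theorem integral_sin_div_mul_fourier_mul_exp {f F : ℝ → ℂ} (hf : Continuous f)
    (hfi : Integrable f) (hF : ∀ ξ : ℝ, ∫ x : ℝ, exp (-((ξ : ℂ) * x) * I) * f x = F ξ)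
    (hFi : Integrable F) (t : ℝ) :
    ∫ s : ℝ, (2 * π : ℂ)⁻¹ * (Real.sin s / s : ℝ) * F s * exp (s * t * I)
      = 2⁻¹ * ∫ u in (-1 : ℝ)..1, f (t + u) := by
  set Φ : ℝ → ℝ → ℂ := fun s u => (2 * π : ℂ)⁻¹ * (F s * exp (s * (t + u : ℝ) * I))
  have hΦ : Integrable (Function.uncurry Φ)
      (volume.prod (volume.restrict (Set.Ioc (-1 : ℝ) 1))) := by
    refine ((hFi.comp_fst _).mul_bdd (c := 1) ?_ ?_).const_mul _
    · exact (by fun_prop : Continuous fun z : ℝ × ℝ =>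
        exp (z.1 * (t + z.2 : ℝ) * I)).aestronglyMeasurable
    · refine .of_forall fun z => ?_
      rw [← ofReal_mul, norm_exp_ofReal_mul_I]
  have hsinc : ∀ᵐ s : ℝ, (2 * π : ℂ)⁻¹ * (Real.sin s / s : ℝ) * F s * exp (s * t * I)
      = 2⁻¹ * ∫ u in (-1 : ℝ)..1, Φ s u := by
    filter_upwards [Measure.ae_ne volume 0] with s hs
    have hsplit : ∀ u : ℝ, Φ s u = (2 * π : ℂ)⁻¹ * F s * exp (s * t * I) * exp (s * u * I) := by
      intro u
      simp only [Φ, ofReal_add, mul_add, add_mul, Complex.exp_add]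
      ring
    simp only [hsplit, intervalIntegral.integral_const_mul, integral_exp_mul_I_eq_sin_div hs]
    ring
  calc ∫ s : ℝ, (2 * π : ℂ)⁻¹ * (Real.sin s / s : ℝ) * F s * exp (s * t * I)
      = 2⁻¹ * ∫ u in Set.Ioc (-1 : ℝ) 1, ∫ s : ℝ, Φ s u := by
        rw [integral_congr_ae hsinc, integral_const_mul, ← integral_integral_swap hΦ]
        simp only [intervalIntegral.integral_of_le (show (-1 : ℝ) ≤ 1 by norm_num)]
    _ = 2⁻¹ * ∫ u in (-1 : ℝ)..1, f (t + u) := by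
        rw [intervalIntegral.integral_of_le (by norm_num)]
        congr 1
        refine integral_congr_ae (.of_forall fun u => ?_)
        exact (integral_const_mul _ _).trans
          (fourier_inversion_angular_s11 hfi hF hFi hf.continuousAt)

theorem EuclideanSpace.integral_fintype_prod_eq_prod {ι 𝕜 : Type*} [Fintype ι] [RCLike 𝕜]
    (f : ι → ℝ → 𝕜) : ∫ s : EuclideanSpace ℝ ι, ∏ i, f i (s i) = ∏ i, ∫ a, f i a := by
  rw [← (EuclideanSpace.volume_preserving_symm_measurableEquiv_toLp ι).symm.integral_comp
    (MeasurableEquiv.measurableEmbedding _)]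
  exact integral_fintype_prod_volume_eq_prod f

theorem exp_inner_mul_prod_mul_exp_inner {ι : Type*} [Fintype ι] (φ : ℝ → ℂ)
    (s x y : EuclideanSpace ℝ ι) :
    exp (-(⟪s, x⟫ : ℂ) * I) * (∏ i, φ (s i)) * exp ((⟪s, y⟫ : ℂ) * I)
      = ∏ i, φ (s i) * exp (s i * (y i - x i : ℝ) * I) := by
  simp only [PiLp.inner_apply, RCLike.inner_apply, conj_trivial, ofReal_sum, ofReal_mul,
    Finset.sum_mul, Finset.prod_mul_distrib, ← Complex.exp_sum, ← Finset.sum_neg_distrib]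
  rw [mul_right_comm, ← Complex.exp_add, ← Finset.sum_add_distrib, mul_comm]
  congr 3 with i
  push_cast
  ring

theorem integral_exp_inner_mul_prod_mul_exp_inner {ι : Type*} [Fintype ι] (φ : ℝ → ℂ)
    (x y : EuclideanSpace ℝ ι) :
    ∫ s : EuclideanSpace ℝ ι, exp (-(⟪s, x⟫ : ℂ) * I) * (∏ i, φ (s i)) * exp ((⟪s, y⟫ : ℂ) * I)
      = ∏ i, ∫ a : ℝ, φ a * exp (a * (y i - x i : ℝ) * I) := by
  simp only [exp_inner_mul_prod_mul_exp_inner]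
  exact EuclideanSpace.integral_fintype_prod_eq_prod fun i a => φ a * exp (a * (y i - x i : ℝ) * I)

theorem indicator_cube_le_prod {ι : Type*} [Fintype ι] {F : ℝ → ℝ} (hF₀ : ∀ t, 0 ≤ F t)
    (hF₁ : ∀ t ∈ Set.Ioc (-1 : ℝ) 1, 1 ≤ F t) (x y : EuclideanSpace ℝ ι) :
    Set.indicator {y : EuclideanSpace ℝ ι | ∀ j, y j ∈ Set.Ioc (x j - 1) (x j + 1)}
      (fun _ => (1 : ℝ)) y ≤ ∏ j, F (y j - x j) := by
  simp only [Set.indicator_apply, Set.mem_ofPred_eq]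
  split_ifs with hy
  · refine Finset.one_le_prod fun j _ => hF₁ _ ?_
    constructor <;> linarith [(hy j).1, (hy j).2]
  · exact Finset.prod_nonneg fun j _ => hF₀ _

theorem average_nonneg_of_nonneg {γ : ℝ → ℝ} (hγ : ∀ x, 0 ≤ γ x) (t : ℝ) :
    0 ≤ 2⁻¹ * ∫ u in (-1 : ℝ)..1, γ (t + u) :=
  mul_nonneg (by norm_num) (intervalIntegral.integral_nonneg (by norm_num) fun _ _ => hγ _)

theorem one_le_average_of_one_le {γ : ℝ → ℝ} (hγ : Continuous γ)
    (hγ₁ : ∀ x ∈ Set.Icc (-2 : ℝ) 2, 1 ≤ γ x) {t : ℝ} (ht : t ∈ Set.Icc (-1 : ℝ) 1) :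
    1 ≤ 2⁻¹ * ∫ u in (-1 : ℝ)..1, γ (t + u) := by
  have hmono : ∫ u in (-1 : ℝ)..1, (1 : ℝ) ≤ ∫ u in (-1 : ℝ)..1, γ (t + u) :=
    intervalIntegral.integral_mono_on (by norm_num) intervalIntegrable_const
      ((by fun_prop : Continuous fun u => γ (t + u)).intervalIntegrable _ _)
      fun u hu => hγ₁ _ ⟨by linarith [ht.1, hu.1], by linarith [ht.2, hu.2]⟩
  have hlen : ∫ u in (-1 : ℝ)..1, (1 : ℝ) = 2 := by norm_num
  linarith

theorem indicator_cube_le_re_integral_general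
    (d : ℕ)
    (ε : ℝ)
    (γ₀ : ℝ → ℝ) (g : ℝ → ℝ)
    (hγcont : Continuous γ₀) (hγint : Integrable γ₀) (hγnonneg : ∀ x, 0 ≤ γ₀ x)
    (hγone : ∀ x ∈ Set.Icc (-2 : ℝ) 2, 1 ≤ γ₀ x)
    (hγhat : ∀ ξ : ℝ, (∫ x : ℝ, Complex.exp (-((ξ : ℂ) * (x : ℂ)) * Complex.I) * (γ₀ x : ℂ))
      = (g ξ : ℂ))
    (hgC2 : ContDiff ℝ 2 g)
    (hgsupp : Function.support g ⊆ Set.Icc (-ε) ε)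
    (r₀ : ℝ → ℝ)
    (hr₀ : ∀ s : ℝ, s ≠ 0 → r₀ s = (1 / (2 * Real.pi)) * (Real.sin s / s) * g s) :
    ∀ x y : EuclideanSpace ℝ (Fin d),
      Set.indicator {y : EuclideanSpace ℝ (Fin d) |
          ∀ j, y j ∈ Set.Ioc (x j - 1) (x j + 1)} (fun _ => (1 : ℝ)) y
        ≤ (∫ s : EuclideanSpace ℝ (Fin d),
            Complex.exp (-(⟪s, x⟫ : ℂ) * Complex.I) * ((∏ j, r₀ (s j) : ℝ) : ℂ)
              * Complex.exp ((⟪s, y⟫ : ℂ) * Complex.I)).re := by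
  intro x y
  have hg : Integrable g := hgC2.continuous.integrable_of_hasCompactSupport
    (.of_support_subset_isCompact isCompact_Icc hgsupp)
  have h1d : ∀ t : ℝ, ∫ s : ℝ, (r₀ s : ℂ) * exp (s * t * I)
      = ((2⁻¹ * ∫ u in (-1 : ℝ)..1, γ₀ (t + u) : ℝ) : ℂ) := by
    intro t
    have hr : ∀ᵐ s : ℝ, (r₀ s : ℂ) * exp (s * t * I)
        = (2 * π : ℂ)⁻¹ * (Real.sin s / s : ℝ) * g s * exp (s * t * I) := by
      filter_upwards [Measure.ae_ne volume 0] with s hs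
      rw [hr₀ s hs]
      push_cast
      ring
    rw [integral_congr_ae hr, integral_sin_div_mul_fourier_mul_exp (f := fun x => (γ₀ x : ℂ))
      (by fun_prop) hγint.ofReal hγhat hg.ofReal, intervalIntegral.integral_ofReal]
    push_cast
    rfl
  simp only [ofReal_prod]
  rw [integral_exp_inner_mul_prod_mul_exp_inner fun a => (r₀ a : ℂ)]
  simp only [h1d, ← ofReal_prod, ofReal_re]
  exact indicator_cube_le_prod (average_nonneg_of_nonneg hγnonneg)
    (fun t ht => one_le_average_of_one_le hγcont hγone (Set.Ioc_subset_Icc_self ht)) x y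

/-- Lemma `lemma-gamma`: pointwise smoothing bound for the indicator of a cube. -/
theorem indicator_cube_le_re_integral
    (d : ℕ) (hd : 0 < d)
    (ε : ℝ) (hε : 0 < ε)
    (γ₀ : ℝ → ℝ) (g : ℝ → ℝ)
    (hγcont : Continuous γ₀) (hγint : Integrable γ₀) (hγnonneg : ∀ x, 0 ≤ γ₀ x)
    (hγone : ∀ x ∈ Set.Icc (-2 : ℝ) 2, 1 ≤ γ₀ x)
    (hγhat : ∀ ξ : ℝ, (∫ x : ℝ, Complex.exp (-((ξ : ℂ) * (x : ℂ)) * Complex.I) * (γ₀ x : ℂ))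
      = (g ξ : ℂ))
    (hgeven : ∀ ξ : ℝ, g (-ξ) = g ξ)
    (hgC2 : ContDiff ℝ 2 g)
    (hgsupp : Function.support g ⊆ Set.Icc (-ε) ε)
    (r₀ : ℝ → ℝ)
    (hr₀ : ∀ s : ℝ, s ≠ 0 → r₀ s = (1 / (2 * Real.pi)) * (Real.sin s / s) * g s)
    (hr₀0 : r₀ 0 = (1 / (2 * Real.pi)) * g 0) :
    ∀ x y : EuclideanSpace ℝ (Fin d),
      Set.indicator {y : EuclideanSpace ℝ (Fin d) |
          ∀ j, y j ∈ Set.Ioc (x j - 1) (x j + 1)} (fun _ => (1 : ℝ)) y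
        ≤ (∫ s : EuclideanSpace ℝ (Fin d),
            Complex.exp (-(⟪s, x⟫ : ℂ) * Complex.I) * ((∏ j, r₀ (s j) : ℝ) : ℂ)
              * Complex.exp ((⟪s, y⟫ : ℂ) * Complex.I)).re :=
  indicator_cube_le_re_integral_general d ε γ₀ g hγcont hγint hγnonneg hγone hγhat hgC2 hgsupp r₀
    hr₀
end

section
/- Let α ∈ (1,2], let ℓ̃ : (0,∞) → (0,∞) be slowly varying, let A be a complex Banach algebra with unit, U ⊆ ℝ^d open and bounded, and Q : U → A continuously differentiable. Suppose there are constants C > 0 and δ₀ ∈ (0,1) such that for all s, s+h ∈ U and j = 1, …, d: ‖Q(s)^n‖ ≤ C·δ₀^n for all n ≥ 1, ‖Q(s+h) - Q(s)‖ ≤ C·|h|, ‖∂_jQ(s)‖ ≤ C, ‖∂_jQ(s+h) - ∂_jQ(s)‖ ≤ C·|h|^{α-1}·ℓ̃(1/|h|), and additionally |h| ≤ C·|h|^{α-1}·ℓ̃(1/|h|) for all nonzero h with s, s+h ∈ U. Then for every δ₁ ∈ (δ₀, 1) there exists C' > 0 such that ‖∂_j(Q(s+h)^n) - ∂_j(Q(s)^n)‖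 ≤ C'·δ₁^n·|h|^{α-1}·ℓ̃(1/|h|) for all s, s+h ∈ U with h ≠ 0, all n ≥ 1, and all j = 1, …, d. -/
/-! The derivative of `Q ^ n` in the direction `v` is `∑ i < n, Q ^ (n - 1 - i) * ∂ᵥQ * Q ^ i`.
Comparing it at `s + h` and at `s` summand by summand, and expanding
`a ^ k - b ^ k = ∑ i < k, a ^ i * (a - b) * b ^ (k - 1 - i)`, the power bound
`‖Q ^ k‖ ≤ C δ₀ ^ k` shows that the difference is at most `n ^ 2 δ₀ ^ (n - 2)` times a
combination of `‖Q (s + h) - Q s‖` and `‖∂ᵥQ (s + h) - ∂ᵥQ s‖`. Both are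
`O(|h| ^ (α - 1) ℓ̃ (1 / |h|))`, the first because `|h|` is, and the polynomial factor `n ^ 2` is
absorbed by passing from `δ₀ ^ n` to `δ₁ ^ n`. -/

open Finset

section PowerEstimates

variable {A : Type*}

theorem pow_sub_pow_eq_sum_pow_mul_sub_mul_pow [Ring A] (a b : A) (k : ℕ) :
    a ^ k - b ^ k = ∑ i ∈ range k, a ^ i * (a - b) * b ^ (k - 1 - i) := by
  have telescope := sum_range_sub (fun i => a ^ i * b ^ (k - i)) k
  simp only [Nat.sub_self, pow_zero, mul_one, Nat.sub_zero, one_mul] at telescope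
  rw [← telescope]
  refine sum_congr rfl fun i hi => ?_
  obtain ⟨m, hm⟩ : ∃ m, k - i = m + 1 := ⟨k - 1 - i, by grind⟩
  rw [show k - (i + 1) = m by omega, show k - 1 - i = m by omega, hm, pow_succ, pow_succ']
  noncomm_ring

variable [SeminormedRing A]

theorem norm_mul_mul_sub_mul_mul_le (x₁ x₂ x₃ y₁ y₂ y₃ : A) :
    ‖x₁ * x₂ * x₃ - y₁ * y₂ * y₃‖ ≤
      ‖x₁ - y₁‖ * ‖x₂‖ * ‖x₃‖ + ‖y₁‖ * ‖x₂ - y₂‖ * ‖x₃‖ + ‖y₁‖ * ‖y₂‖ * ‖x₃ - y₃‖ := by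
  have : x₁ * x₂ * x₃ - y₁ * y₂ * y₃ =
      (x₁ - y₁) * x₂ * x₃ + y₁ * (x₂ - y₂) * x₃ + y₁ * y₂ * (x₃ - y₃) := by noncomm_ring
  rw [this]
  exact (norm_add₃_le ..).trans (add_le_add_three norm_mul₃_le norm_mul₃_le norm_mul₃_le)

theorem norm_pow_sub_pow_le {a b : A} {M δ : ℝ} (ha : ∀ k, ‖a ^ k‖ ≤ M * δ ^ k)
    (hb : ∀ k, ‖b ^ k‖ ≤ M * δ ^ k) (k : ℕ) :
    ‖a ^ k - b ^ k‖ ≤ k * M ^ 2 * δ ^ (k - 1) * ‖a - b‖ := by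
  rw [pow_sub_pow_eq_sum_pow_mul_sub_mul_pow]
  calc ‖∑ i ∈ range k, a ^ i * (a - b) * b ^ (k - 1 - i)‖
      ≤ ∑ i ∈ range k, M * δ ^ i * ‖a - b‖ * (M * δ ^ (k - 1 - i)) := by
        refine (norm_sum_le _ _).trans (sum_le_sum fun i _ => norm_mul₃_le.trans ?_)
        gcongr
        · exact mul_nonneg ((norm_nonneg _).trans (ha i)) (norm_nonneg _)
        · exact ha i
        · exact hb _
    _ = ∑ _i ∈ range k, M ^ 2 * δ ^ (k - 1) * ‖a - b‖ := by
        refine sum_congr rfl fun i hi => ?_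
        rw [← Nat.add_sub_cancel' (show i ≤ k - 1 by grind), pow_add,
          Nat.add_sub_cancel_left]
        ring
    _ = k * M ^ 2 * δ ^ (k - 1) * ‖a - b‖ := by
        rw [sum_const, card_range, nsmul_eq_mul]
        ring

theorem norm_pow_mul_mul_pow_sub_le {a b e f : A} {M δ C : ℝ} (hδ0 : 0 ≤ δ) (hδ1 : δ ≤ 1)
    (ha : ∀ k, ‖a ^ k‖ ≤ M * δ ^ k) (hb : ∀ k, ‖b ^ k‖ ≤ M * δ ^ k) (he : ‖e‖ ≤ C)
    (hf : ‖f‖ ≤ C) (j i : ℕ) :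
    ‖a ^ j * e * a ^ i - b ^ j * f * b ^ i‖ ≤
      (j + i + 1) * δ ^ (j + i - 1) * (M ^ 3 * C * ‖a - b‖ + M ^ 2 * ‖e - f‖) := by
  have hM : 0 ≤ M := by simpa using (norm_nonneg _).trans (ha 0)
  have hC : 0 ≤ C := (norm_nonneg _).trans he
  have hδ {p : ℕ} (hp : j + i - 1 ≤ p) : δ ^ p ≤ δ ^ (j + i - 1) :=
    pow_le_pow_of_le_one hδ0 hδ1 hp
  calc _ ≤ ‖a ^ j - b ^ j‖ * ‖e‖ * ‖a ^ i‖ + ‖b ^ j‖ * ‖e - f‖ * ‖a ^ i‖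
        + ‖b ^ j‖ * ‖f‖ * ‖a ^ i - b ^ i‖ := norm_mul_mul_sub_mul_mul_le ..
    _ ≤ (j * M ^ 2 * δ ^ (j - 1) * ‖a - b‖) * C * (M * δ ^ i)
        + (M * δ ^ j) * ‖e - f‖ * (M * δ ^ i)
        + (M * δ ^ j) * C * (i * M ^ 2 * δ ^ (i - 1) * ‖a - b‖) := by
      gcongr
      all_goals first
        | exact norm_pow_sub_pow_le ha hb _
        | exact ha _
        | exact hb _
    _ = M ^ 3 * C * ‖a - b‖ * (j * (δ ^ (j - 1) * δ ^ i) + i * (δ ^ j * δ ^ (i - 1)))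
        + M ^ 2 * ‖e - f‖ * (δ ^ j * δ ^ i) := by ring
    _ ≤ M ^ 3 * C * ‖a - b‖ * (j * δ ^ (j + i - 1) + i * δ ^ (j + i - 1))
        + M ^ 2 * ‖e - f‖ * δ ^ (j + i - 1) := by
      simp only [← pow_add]
      gcongr _ * (_ * ?_ + _ * ?_) + _ * ?_ <;> exact hδ (by omega)
    _ ≤ (j + i + 1) * δ ^ (j + i - 1) * (M ^ 3 * C * ‖a - b‖ + M ^ 2 * ‖e - f‖) := by
      have hX : 0 ≤ M ^ 3 * C * ‖a - b‖ * δ ^ (j + i - 1) := by positivity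
      have hY : 0 ≤ M ^ 2 * ‖e - f‖ * δ ^ (j + i - 1) := by positivity
      nlinarith

theorem norm_sum_pow_mul_mul_pow_sub_le {a b e f : A} {M δ C : ℝ} (hδ0 : 0 ≤ δ) (hδ1 : δ ≤ 1)
    (ha : ∀ k, ‖a ^ k‖ ≤ M * δ ^ k) (hb : ∀ k, ‖b ^ k‖ ≤ M * δ ^ k) (he : ‖e‖ ≤ C)
    (hf : ‖f‖ ≤ C) (n : ℕ) :
    ‖∑ i ∈ range n, (a ^ (n - 1 - i) * e * a ^ i - b ^ (n - 1 - i) * f * b ^ i)‖ ≤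
      n ^ 2 * δ ^ (n - 2) * (M ^ 3 * C * ‖a - b‖ + M ^ 2 * ‖e - f‖) := by
  have term (i : ℕ) (hi : i ∈ range n) :
      ‖a ^ (n - 1 - i) * e * a ^ i - b ^ (n - 1 - i) * f * b ^ i‖ ≤
        n * δ ^ (n - 2) * (M ^ 3 * C * ‖a - b‖ + M ^ 2 * ‖e - f‖) := by
    have hin : i < n := mem_range.mp hi
    have hcast : ((n - 1 - i : ℕ) : ℝ) + i + 1 = n := by norm_cast; omega
    simpa only [hcast, show n - 1 - i + i - 1 = n - 2 by omega] using
      norm_pow_mul_mul_pow_sub_le hδ0 hδ1 ha hb he hf (n - 1 - i) i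
  calc _ ≤ ∑ i ∈ range n, ‖a ^ (n - 1 - i) * e * a ^ i - b ^ (n - 1 - i) * f * b ^ i‖ :=
        norm_sum_le _ _
    _ ≤ ∑ _i ∈ range n, n * δ ^ (n - 2) * (M ^ 3 * C * ‖a - b‖ + M ^ 2 * ‖e - f‖) :=
        sum_le_sum term
    _ = _ := by rw [sum_const, card_range, nsmul_eq_mul]; ring

end PowerEstimates

theorem fderiv_fun_pow_apply {𝕜 A E : Type*} [NontriviallyNormedField 𝕜] [NormedRing A]
    [NormedAlgebra 𝕜 A] [NormedAddCommGroup E] [NormedSpace 𝕜 E] {f : E → A} {x : E}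
    (hf : DifferentiableAt 𝕜 f x) (n : ℕ) (v : E) :
    fderiv 𝕜 (fun x => f x ^ n) x v =
      ∑ i ∈ range n, f x ^ (n - 1 - i) * fderiv 𝕜 f x v * f x ^ i := by
  simp [fderiv_fun_pow' n hf, Nat.pred_eq_sub_one]

theorem exists_pow_mul_pow_sub_le_mul_pow (k p : ℕ) {δ₀ δ₁ : ℝ} (hδ₀ : 0 < δ₀) (hδ₀₁ : δ₀ < δ₁)
    (hδ₀1 : δ₀ ≤ 1) : ∃ K > 0, ∀ n : ℕ, (n : ℝ) ^ k * δ₀ ^ (n - p) ≤ K * δ₁ ^ n := by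
  have hδ₁ : 0 < δ₁ := hδ₀.trans hδ₀₁
  have hr : |δ₀ / δ₁| < 1 := by
    rw [abs_of_pos (div_pos hδ₀ hδ₁), div_lt_one hδ₁]; exact hδ₀₁
  obtain ⟨K₀, hK₀⟩ := (tendsto_pow_const_mul_const_pow_of_abs_lt_one k hr).bddAbove_range
  have hK : ∀ n : ℕ, (n : ℝ) ^ k * δ₀ ^ (n - p) ≤ K₀ / δ₀ ^ p * δ₁ ^ n := by
    intro n
    have hshift : δ₀ ^ (n - p) * δ₀ ^ p ≤ δ₀ ^ n := by
      rw [← pow_add]; exact pow_le_pow_of_le_one hδ₀.le hδ₀1 (by omega)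
    have hK₀n : (n : ℝ) ^ k * (δ₀ / δ₁) ^ n ≤ K₀ := hK₀ ⟨n, rfl⟩
    rw [div_pow, mul_div_assoc', div_le_iff₀ (by positivity)] at hK₀n
    rw [div_mul_eq_mul_div, le_div_iff₀ (by positivity)]
    calc (n : ℝ) ^ k * δ₀ ^ (n - p) * δ₀ ^ p ≤ n ^ k * δ₀ ^ n := by
          rw [mul_assoc]; gcongr
      _ ≤ K₀ * δ₁ ^ n := hK₀n
  refine ⟨K₀ / δ₀ ^ p, ?_, hK⟩
  have h1 := hK 1
  simp only [Nat.cast_one, one_pow, one_mul, pow_one] at h1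
  exact pos_of_mul_pos_left ((pow_pos hδ₀ _).trans_le h1) hδ₁.le

theorem fderiv_pow_diff_norm_le_general
    (α : ℝ)
    (ℓt : ℝ → ℝ)
    {A : Type*} [NormedRing A] [NormedAlgebra ℂ A]
    (d : ℕ) (U : Set (EuclideanSpace ℝ (Fin d))) (hUopen : IsOpen U)
    (Q : EuclideanSpace ℝ (Fin d) → A)
    (hQdiff : ContDiffOn ℝ 1 Q U)
    (C : ℝ) (hC : 0 < C) (δ₀ : ℝ) (hδ₀ : δ₀ ∈ Set.Ioo (0 : ℝ) 1)
    (hpow : ∀ s ∈ U, ∀ n : ℕ, 1 ≤ n → ‖Q s ^ n‖ ≤ C * δ₀ ^ n)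
    (hlip : ∀ s ∈ U, ∀ h : EuclideanSpace ℝ (Fin d), s + h ∈ U →
      ‖Q (s + h) - Q s‖ ≤ C * ‖h‖)
    (hdbdd : ∀ s ∈ U, ∀ j : Fin d, ‖fderiv ℝ Q s (EuclideanSpace.single j 1)‖ ≤ C)
    (hdholder : ∀ s ∈ U, ∀ h : EuclideanSpace ℝ (Fin d), s + h ∈ U → ∀ j : Fin d,
      ‖fderiv ℝ Q (s + h) (EuclideanSpace.single j 1)
          - fderiv ℝ Q s (EuclideanSpace.single j 1)‖
        ≤ C * ‖h‖ ^ (α - 1) * ℓt (1 / ‖h‖))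
    (hcompare : ∀ s ∈ U, ∀ h : EuclideanSpace ℝ (Fin d), s + h ∈ U → h ≠ 0 →
      ‖h‖ ≤ C * ‖h‖ ^ (α - 1) * ℓt (1 / ‖h‖)) :
    ∀ δ₁ ∈ Set.Ioo δ₀ 1, ∃ C' > (0 : ℝ),
      ∀ s ∈ U, ∀ h : EuclideanSpace ℝ (Fin d), s + h ∈ U → h ≠ 0 →
      ∀ n : ℕ, 1 ≤ n → ∀ j : Fin d,
      ‖fderiv ℝ (fun t => Q t ^ n) (s + h) (EuclideanSpace.single j 1)
          - fderiv ℝ (fun t => Q t ^ n) s (EuclideanSpace.single j 1)‖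
        ≤ C' * δ₁ ^ n * ‖h‖ ^ (α - 1) * ℓt (1 / ‖h‖) := by
  rintro δ₁ ⟨hδ₀₁, -⟩
  obtain ⟨hδ₀0, hδ₀1⟩ := hδ₀
  obtain ⟨K, hK0, hK⟩ := exists_pow_mul_pow_sub_le_mul_pow 2 2 hδ₀0 hδ₀₁ hδ₀1.le
  set M := max C ‖(1 : A)‖
  have hQpow : ∀ t ∈ U, ∀ k, ‖Q t ^ k‖ ≤ M * δ₀ ^ k := by
    rintro t ht (_ | k)
    · simp [M]
    · exact (hpow t ht _ k.succ_pos).trans (by gcongr; exact le_max_left _ _)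
  have hdiff : ∀ t ∈ U, DifferentiableAt ℝ Q t := fun t ht =>
    (hQdiff.differentiableOn one_ne_zero).differentiableAt (hUopen.mem_nhds ht)
  refine ⟨K * (M ^ 3 * C ^ 3 + M ^ 2 * C), by positivity, ?_⟩
  intro s hs h hsh hh n _ j
  set ε := ‖h‖ ^ (α - 1) * ℓt (1 / ‖h‖)
  have hhε : ‖h‖ ≤ C * ε := by simpa only [ε, mul_assoc] using hcompare s hs h hsh hh
  have hε : 0 ≤ ε := (pos_of_mul_pos_right ((norm_pos_iff.mpr hh).trans_le hhε) hC.le).le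
  rw [fderiv_fun_pow_apply (hdiff _ hsh), fderiv_fun_pow_apply (hdiff _ hs),
    ← sum_sub_distrib]
  calc _ ≤ n ^ 2 * δ₀ ^ (n - 2) * (M ^ 3 * C * ‖Q (s + h) - Q s‖
        + M ^ 2 * ‖fderiv ℝ Q (s + h) (EuclideanSpace.single j 1)
          - fderiv ℝ Q s (EuclideanSpace.single j 1)‖) :=
        norm_sum_pow_mul_mul_pow_sub_le hδ₀0.le hδ₀1.le (hQpow _ hsh) (hQpow _ hs)
          (hdbdd _ hsh j) (hdbdd _ hs j) n
    _ ≤ n ^ 2 * δ₀ ^ (n - 2) * (M ^ 3 * C * (C * (C * ε)) + M ^ 2 * (C * ε)) := by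
        gcongr
        · exact (hlip s hs h hsh).trans (by gcongr)
        · simpa only [ε, mul_assoc] using hdholder s hs h hsh j
    _ ≤ K * δ₁ ^ n * ((M ^ 3 * C ^ 3 + M ^ 2 * C) * ε) := by
        rw [show M ^ 3 * C * (C * (C * ε)) + M ^ 2 * (C * ε)
          = (M ^ 3 * C ^ 3 + M ^ 2 * C) * ε by ring]
        exact mul_le_mul_of_nonneg_right (hK n) (by positivity)
    _ = _ := by ring

/-- Second estimate of Lemma `lemma-op`: Hölder modulus of continuity of the derivative
of powers of `Q`. -/
theorem fderiv_pow_diff_norm_le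
    (α : ℝ) (hα : α ∈ Set.Ioc (1 : ℝ) 2)
    (ℓt : ℝ → ℝ) (hℓtpos : ∀ x > (0 : ℝ), 0 < ℓt x)
    (hℓtslow : ∀ lam > (0 : ℝ), Filter.Tendsto (fun x => ℓt (lam * x) / ℓt x)
      Filter.atTop (nhds 1))
    {A : Type*} [NormedRing A] [NormedAlgebra ℂ A] [CompleteSpace A]
    (d : ℕ) (U : Set (EuclideanSpace ℝ (Fin d))) (hUopen : IsOpen U)
    (hUbdd : Bornology.IsBounded U)
    (Q : EuclideanSpace ℝ (Fin d) → A)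
    (hQdiff : ContDiffOn ℝ 1 Q U)
    (C : ℝ) (hC : 0 < C) (δ₀ : ℝ) (hδ₀ : δ₀ ∈ Set.Ioo (0 : ℝ) 1)
    (hpow : ∀ s ∈ U, ∀ n : ℕ, 1 ≤ n → ‖Q s ^ n‖ ≤ C * δ₀ ^ n)
    (hlip : ∀ s ∈ U, ∀ h : EuclideanSpace ℝ (Fin d), s + h ∈ U →
      ‖Q (s + h) - Q s‖ ≤ C * ‖h‖)
    (hdbdd : ∀ s ∈ U, ∀ j : Fin d, ‖fderiv ℝ Q s (EuclideanSpace.single j 1)‖ ≤ C)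
    (hdholder : ∀ s ∈ U, ∀ h : EuclideanSpace ℝ (Fin d), s + h ∈ U → ∀ j : Fin d,
      ‖fderiv ℝ Q (s + h) (EuclideanSpace.single j 1)
          - fderiv ℝ Q s (EuclideanSpace.single j 1)‖
        ≤ C * ‖h‖ ^ (α - 1) * ℓt (1 / ‖h‖))
    (hcompare : ∀ s ∈ U, ∀ h : EuclideanSpace ℝ (Fin d), s + h ∈ U → h ≠ 0 →
      ‖h‖ ≤ C * ‖h‖ ^ (α - 1) * ℓt (1 / ‖h‖)) :
    ∀ δ₁ ∈ Set.Ioo δ₀ 1, ∃ C' > (0 : ℝ),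
      ∀ s ∈ U, ∀ h : EuclideanSpace ℝ (Fin d), s + h ∈ U → h ≠ 0 →
      ∀ n : ℕ, 1 ≤ n → ∀ j : Fin d,
      ‖fderiv ℝ (fun t => Q t ^ n) (s + h) (EuclideanSpace.single j 1)
          - fderiv ℝ (fun t => Q t ^ n) s (EuclideanSpace.single j 1)‖
        ≤ C' * δ₁ ^ n * ‖h‖ ^ (α - 1) * ℓt (1 / ‖h‖) :=
  fderiv_pow_diff_norm_le_general α ℓt d U hUopen Q hQdiff C hC δ₀ hδ₀ hpow hlip hdbdd hdholder
    hcompare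
end
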